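/- arXiv:1805.04921 — 4 statements merged into one kernel-verified Lean document; each statement's English description precedes it below -/
import Mathlib

section
/- Let M be the monoid of all regressive functions on a finite poset P containing a chain a < b < c of length 3. Then X(M) is not linear: the functions f (fixing all points except f(b) = a) and g (fixing all points except g(c) = b) have incomparable left cosets. -/
/-- If a finite poset `P` contains a chain `a < b < c`, then in the monoid of all
regressive functions on `P`, the functions `f` (identity except `f b = a`) and `g`
(identity except `g c = b`) have incomparable left cosets, so `X(M)` is not linear. -/
theorem stmt_2 {P : Type*} [PartialOrder P] [Fintype P] [DecidableEq P]
    (a b c : P) (hab : a < b) (hbc : b < c)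
    (f g : P → P) (hfdef : f = Function.update id b a) (hgdef : g = Function.update id c b) :
    ¬ ({k : P → P | ∃ h, (∀ p, h p ≤ p) ∧ k = f ∘ h} ⊆
       {k : P → P | ∃ h, (∀ p, h p ≤ p) ∧ k = g ∘ h}) ∧
    ¬ ({k : P → P | ∃ h, (∀ p, h p ≤ p) ∧ k = g ∘ h} ⊆
       {k : P → P | ∃ h, (∀ p, h p ≤ p) ∧ k = f ∘ h}) := by
  constructor
  · intro hsub
    obtain ⟨h, hh, hk⟩ := hsub ⟨id, fun p => le_refl p, rfl⟩
    have := congrFun hk c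
    simp only [hfdef, hgdef, Function.comp_apply, Function.update_apply, id,
      if_neg hbc.ne'] at this
    split_ifs at this with h1
    · exact hbc.ne' this
    · exact h1 this.symm
  · intro hsub
    obtain ⟨h, hh, hk⟩ := hsub ⟨id, fun p => le_refl p, rfl⟩
    have := congrFun hk b
    simp only [hfdef, hgdef, Function.comp_apply, Function.update_apply, id,
      if_neg hbc.ne, ite_self] at this
    split_ifs at this with h1
    · exact hab.ne' this
    · exact h1 this.symm
end

section
/- Let P be a finite poset and x ∈ P. If there exist incomparable elements y, z with y ≤ x and z ≤ x, then there exist incomparable elements y' ≤ y and z' ≤ z with level(y') = level(z'), where level(w) is the maximal length of a chain in P with maximal element w. -/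
/-- The level of `x` in a finite poset: the maximal length (cardinality) of a chain
whose greatest element is `x`. -/
noncomputable def level {P : Type*} [PartialOrder P] [Fintype P] (x : P) : ℕ :=
  sSup {n | ∃ C : Finset P, IsChain (· ≤ ·) (C : Set P) ∧ x ∈ C ∧
    (∀ y ∈ C, y ≤ x) ∧ C.card = n}

/-!
If `level y ≤ level z`, then walking down a longest chain ending at `z` one meets some
`z' ≤ z` of level exactly `level y`. Since `level` is strictly monotone, two comparable
elements of the same level are equal, so `y` and `z'` are incomparable (`y = z'` would
give `y ≤ z`).
-/

namespace Level

variable {P : Type*} [PartialOrder P] [Fintype P]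

private lemma bddAbove_chain_cards (x : P) :
    BddAbove {n | ∃ C : Finset P, IsChain (· ≤ ·) (C : Set P) ∧ x ∈ C ∧
      (∀ y ∈ C, y ≤ x) ∧ C.card = n} :=
  ⟨Fintype.card P, by rintro _ ⟨C, -, -, -, rfl⟩; exact C.card_le_univ⟩

lemma card_le_level {x : P} {C : Finset P} (hC : IsChain (· ≤ ·) (C : Set P)) (hx : x ∈ C)
    (hCx : ∀ y ∈ C, y ≤ x) : C.card ≤ level x :=
  le_csSup (bddAbove_chain_cards x) ⟨C, hC, hx, hCx, rfl⟩

lemma exists_chain_card_eq_level (x : P) :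
    ∃ C : Finset P, IsChain (· ≤ ·) (C : Set P) ∧ x ∈ C ∧ (∀ y ∈ C, y ≤ x) ∧
      C.card = level x := by
  refine Nat.sSup_mem ?_ (bddAbove_chain_cards x)
  exact ⟨1, {x}, by simp, by simp, by simp, by simp⟩

lemma one_le_level (x : P) : 1 ≤ level x :=
  card_le_level (C := {x}) (by simp) (by simp) (by simp)

lemma level_strictMono : StrictMono (level : P → ℕ) := by
  classical
  intro a b hab
  obtain ⟨C, hC, haC, hCa, hcard⟩ := exists_chain_card_eq_level a
  have hbC : b ∉ C := fun hb => (hCa b hb).not_gt hab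
  have hCb : ∀ c ∈ insert b C, c ≤ b := by
    simp only [Finset.mem_insert, forall_eq_or_imp, le_refl, true_and]
    exact fun c hc => (hCa c hc).trans hab.le
  have hchain : IsChain (· ≤ ·) (insert b C : Set P) :=
    hC.insert fun c hc _ => Or.inr ((hCa c hc).trans hab.le)
  calc level a < (insert b C).card := by rw [Finset.card_insert_of_notMem hbC, hcard]; omega
    _ ≤ level b := card_le_level (by simpa using hchain) (Finset.mem_insert_self b C) hCb

lemma eq_of_le_of_level_eq {a b : P} (hab : a ≤ b) (h : level a = level b) : a = b :=
  hab.eq_or_lt.resolve_right fun hlt => (level_strictMono hlt).ne h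

/-- The top of a longest chain ending at `a`, once `a` is removed, has level `level a - 1`. -/
lemma exists_lt_level_eq_pred {a : P} (h : 2 ≤ level a) :
    ∃ b < a, level b = level a - 1 := by
  classical
  obtain ⟨C, hC, haC, hCa, hcard⟩ := exists_chain_card_eq_level a
  have hcard' : (C.erase a).card = level a - 1 := by
    rw [Finset.card_erase_of_mem haC, hcard]
  have hC' : IsChain (· ≤ ·) (C.erase a : Set P) := hC.mono (by simp)
  obtain ⟨m, hmC, hmax⟩ := (C.erase a).exists_maximal (by rw [← Finset.card_pos]; omega)
  have hma : m < a := lt_of_le_of_ne (hCa m (Finset.mem_of_mem_erase hmC))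
    (Finset.ne_of_mem_erase hmC)
  have hlevel : level a - 1 ≤ level m :=
    hcard' ▸ card_le_level hC' hmC fun c hc => (hC'.total hc hmC).elim id (hmax hc)
  exact ⟨m, hma, le_antisymm (by have := level_strictMono hma; omega) hlevel⟩

lemma exists_le_level_eq {a : P} {n : ℕ} (hn : 1 ≤ n) (hna : n ≤ level a) :
    ∃ b ≤ a, level b = n := by
  obtain ⟨k, hk⟩ := Nat.exists_eq_add_of_le hna
  induction k generalizing a with
  | zero => exact ⟨a, le_rfl, hk⟩
  | succ k ih =>
    obtain ⟨b, hba, hb⟩ := exists_lt_level_eq_pred (a := a) (by omega)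
    obtain ⟨c, hcb, hc⟩ := ih (a := b) (by omega) (by omega)
    exact ⟨c, hcb.trans hba.le, hc⟩

end Level

open Level in
theorem stmt_4_general {P : Type*} [PartialOrder P] [Fintype P]
    (y z : P) (h1 : ¬ y ≤ z) (h2 : ¬ z ≤ y) :
    ∃ y' z' : P, y' ≤ y ∧ z' ≤ z ∧ ¬ y' ≤ z' ∧ ¬ z' ≤ y' ∧ level y' = level z' := by
  wlog hyz : level y ≤ level z generalizing y z
  · obtain ⟨z', y', hz', hy', h, h', hlev⟩ := this z y h2 h1 (by omega)
    exact ⟨y', z', hy', hz', h', h, hlev.symm⟩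
  obtain ⟨z', hz', hlev⟩ := exists_le_level_eq (one_le_level y) hyz
  refine ⟨y, z', le_rfl, hz', fun h => h1 (h.trans hz'), fun h => h1 ?_, hlev.symm⟩
  exact (eq_of_le_of_level_eq h hlev).ge.trans hz'

/-- If `y, z ≤ x` are incomparable in a finite poset, then there are incomparable
`y' ≤ y` and `z' ≤ z` with the same level. -/
theorem stmt_4 {P : Type*} [PartialOrder P] [Fintype P]
    (x y z : P) (hy : y ≤ x) (hz : z ≤ x) (h1 : ¬ y ≤ z) (h2 : ¬ z ≤ y) :
    ∃ y' z' : P, y' ≤ y ∧ z' ≤ z ∧ ¬ y' ≤ z' ∧ ¬ z' ≤ y' ∧ level y' = level z' :=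
  stmt_4_general y z h1 h2
end

section
/- Let L be a finite lattice containing two incomparable elements a, b chosen on the minimal level containing incomparable elements. Then a ∧ b is exactly one level below a and b, and the set {x ∈ L : x ≤ a ∧ b} is linearly ordered. -/
section

variable {P : Type*} [PartialOrder P] [Fintype P]

theorem bddAbove_chain_cards (x : P) :
    BddAbove {n | ∃ C : Finset P, IsChain (· ≤ ·) (C : Set P) ∧ x ∈ C ∧
      (∀ y ∈ C, y ≤ x) ∧ C.card = n} :=
  ⟨Fintype.card P, fun _ ⟨D, _, _, _, hD⟩ => hD ▸ D.card_le_univ⟩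

theorem card_le_level {C : Finset P} {x : P} (hC : IsChain (· ≤ ·) (C : Set P)) (hx : x ∈ C)
    (hle : ∀ y ∈ C, y ≤ x) : C.card ≤ level x :=
  le_csSup (bddAbove_chain_cards x) ⟨C, hC, hx, hle, rfl⟩

theorem exists_isChain_card_eq_level (x : P) :
    ∃ C : Finset P, IsChain (· ≤ ·) (C : Set P) ∧ x ∈ C ∧ (∀ y ∈ C, y ≤ x) ∧
      C.card = level x := by
  refine Nat.sSup_mem ?_ (bddAbove_chain_cards x)
  exact ⟨1, {x}, by simp, by simp, by simp, rfl⟩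

theorem one_le_level (x : P) : 1 ≤ level x :=
  card_le_level (C := {x}) (by simp) (by simp) (by simp)

theorem level_strictMono : StrictMono (level : P → ℕ) := by
  classical
  intro x y hxy
  obtain ⟨C, hC, hxC, hle, hcard⟩ := exists_isChain_card_eq_level x
  have hyC : y ∉ C := fun hy => (hle y hy).not_gt hxy
  have hle' : ∀ z ∈ insert y C, z ≤ y := by
    simpa using fun z hz => (hle z hz).trans hxy.le
  have hchain : IsChain (· ≤ ·) ((insert y C : Finset P) : Set P) := by
    rw [Finset.coe_insert]
    exact hC.insert fun z hz _ => Or.inr ((hle z hz).trans hxy.le)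
  have := card_le_level hchain (Finset.mem_insert_self y C) hle'
  rw [Finset.card_insert_of_notMem hyC, hcard] at this
  omega

theorem level_mono : Monotone (level : P → ℕ) := level_strictMono.monotone

theorem exists_lt_level_add_one_eq {x : P} (hx : 2 ≤ level x) :
    ∃ c < x, level c + 1 = level x := by
  classical
  obtain ⟨C, hC, hxC, hle, hcard⟩ := exists_isChain_card_eq_level x
  have hne : (C.erase x).Nonempty := by
    rw [← Finset.card_pos, Finset.card_erase_of_mem hxC, hcard]; omega
  obtain ⟨c, hcC, hcmax⟩ := (C.erase x).exists_maximal hne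
  have hcx : c < x := (hle c (Finset.mem_of_mem_erase hcC)).lt_of_ne (Finset.ne_of_mem_erase hcC)
  have hC' : IsChain (· ≤ ·) ((C.erase x : Finset P) : Set P) :=
    hC.mono (Finset.coe_subset.2 (C.erase_subset x))
  have hle_c : ∀ z ∈ C.erase x, z ≤ c := fun z hz => (hC'.total hz hcC).elim id (hcmax hz)
  have hge := card_le_level hC' hcC hle_c
  rw [Finset.card_erase_of_mem hxC, hcard] at hge
  have hlt := level_strictMono hcx
  exact ⟨c, hcx, by omega⟩

end

theorem stmt_10_general {L : Type*} [Lattice L] [Fintype L] (a b : L) (k : ℕ)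
    (hab1 : ¬ a ≤ b)
    (ha : level a = k) (hb : level b = k)
    (hmin : ∀ u v : L, level u < k → level v < k → u ≤ v ∨ v ≤ u) :
    level (a ⊓ b) + 1 = level a ∧ level (a ⊓ b) + 1 = level b ∧
    (∀ u v : L, u ≤ a ⊓ b → v ≤ a ⊓ b → u ≤ v ∨ v ≤ u) := by
  have hinf_lt : level (a ⊓ b) < k := ha ▸ level_strictMono (inf_lt_left.2 hab1)
  have hk : 2 ≤ k := by have := one_le_level (a ⊓ b); omega
  obtain ⟨c, hca, hc⟩ := exists_lt_level_add_one_eq (ha ▸ hk)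
  obtain ⟨d, hdb, hd⟩ := exists_lt_level_add_one_eq (hb ▸ hk)
  have hinf_ge : k ≤ level (a ⊓ b) + 1 := by
    rcases hmin c d (by omega) (by omega) with hcd | hdc
    · have := level_mono (le_inf hca.le (hcd.trans hdb.le)); omega
    · have := level_mono (le_inf (hdc.trans hca.le) hdb.le); omega
  refine ⟨by omega, by omega, fun u v hu hv => hmin u v ?_ ?_⟩
  · exact (level_mono hu).trans_lt hinf_lt
  · exact (level_mono hv).trans_lt hinf_lt

/-- If `a, b` are incomparable elements on the minimal level `k` containing
incomparable elements of a finite lattice `L` (all elements of level `< k` being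
pairwise comparable), then `a ⊓ b` is exactly one level below `a` and `b`, and
`{x : x ≤ a ⊓ b}` is linearly ordered. -/
theorem stmt_10 {L : Type*} [Lattice L] [Fintype L] (a b : L) (k : ℕ)
    (hab1 : ¬ a ≤ b) (hab2 : ¬ b ≤ a)
    (ha : level a = k) (hb : level b = k)
    (hmin : ∀ u v : L, level u < k → level v < k → u ≤ v ∨ v ≤ u) :
    level (a ⊓ b) + 1 = level a ∧ level (a ⊓ b) + 1 = level b ∧
    (∀ u v : L, u ≤ a ⊓ b → v ≤ a ⊓ b → u ≤ v ∨ v ≤ u) :=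
  stmt_10_general a b k hab1 ha hb hmin
end

section
/- The number of order-preserving regressive functions from {0,1,…,n−1} to itself equals the n-th Catalan number (1/(n+1))·C(2n, n). -/
/-!
Split an order-preserving regressive `f` on `{0, …, n}` at its last fixed point `j` (which exists
since `f 0 = 0`). Below `j`, `f` is an arbitrary element of `C_j`. Above `j`, monotonicity and
maximality of `j` force `j ≤ f i < i`, so `i ↦ f (j + 1 + i) - j` is an arbitrary element of
`C_{n-j}`. Hence `|C_{n+1}| = ∑ⱼ |C_j| |C_{n-j}|`, the Catalan recurrence.
-/

/-- The underlying set of the Catalan monoid `Cₙ`. -/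
abbrev OrderPreservingRegressive (n : ℕ) : Type :=
  {f : Fin n → Fin n // Monotone f ∧ ∀ i, f i ≤ i}

namespace OrderPreservingRegressive

variable {n : ℕ}

lemma apply_zero (f : OrderPreservingRegressive (n + 1)) : f.1 0 = 0 :=
  Fin.le_zero_iff.mp (f.2.2 0)

def lastFixedPoint (f : OrderPreservingRegressive (n + 1)) : Fin (n + 1) :=
  ({i | f.1 i = i} : Finset (Fin (n + 1))).max' ⟨0, by simp [apply_zero]⟩

lemma lastFixedPoint_eq_iff {f : OrderPreservingRegressive (n + 1)} {j : Fin (n + 1)} :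
    lastFixedPoint f = j ↔ f.1 j = j ∧ ∀ i, j < i → f.1 i < i := by
  constructor
  · rintro rfl
    refine ⟨(Finset.mem_filter.mp (Finset.max'_mem {i | f.1 i = i} _)).2, fun i hi => ?_⟩
    refine lt_of_le_of_ne (f.2.2 i) fun hfix => hi.not_ge ?_
    exact Finset.le_max' _ i (by simp [hfix])
  · rintro ⟨hj, hgt⟩
    refine le_antisymm (Finset.max'_le _ _ _ fun i hi => ?_) (Finset.le_max' _ j (by simp [hj]))
    by_contra! hlt
    exact (hgt i hlt).ne (Finset.mem_filter.mp hi).2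

section Decomposition

variable (j : Fin (n + 1))

def restrictBelow (f : OrderPreservingRegressive (n + 1)) : OrderPreservingRegressive j :=
  ⟨fun i => ⟨f.1 (i.castLE j.isLt.le), (f.2.2 _).trans_lt i.isLt⟩,
    fun _ _ hab => f.2.1 hab, fun i => f.2.2 (i.castLE _)⟩

variable {j} {f : OrderPreservingRegressive (n + 1)}

lemma le_apply_of_lastFixedPoint_le (hf : lastFixedPoint f = j) {i : Fin (n + 1)} (hi : j ≤ i) :
    j ≤ f.1 i :=
  (lastFixedPoint_eq_iff.mp hf).1 ▸ f.2.1 hi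

lemma apply_lt_of_lastFixedPoint_lt (hf : lastFixedPoint f = j) {i : Fin (n + 1)} (hi : j < i) :
    f.1 i < i :=
  (lastFixedPoint_eq_iff.mp hf).2 i hi

def above (j : Fin (n + 1)) (i : Fin (n - j)) : Fin (n + 1) :=
  ⟨j + 1 + i, by omega⟩

@[simp] lemma val_above (i : Fin (n - j)) : (above j i : ℕ) = j + 1 + i := rfl

lemma lt_above (i : Fin (n - j)) : j < above j i :=
  Fin.lt_def.mpr (by simp only [val_above]; omega)

lemma above_le_above {a b : Fin (n - j)} (hab : a ≤ b) : above j a ≤ above j b :=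
  Nat.add_le_add_left hab _

def shiftAbove (hf : lastFixedPoint f = j) : OrderPreservingRegressive (n - j) :=
  ⟨fun i => ⟨(f.1 (above j i) : ℕ) - j, by
      have := apply_lt_of_lastFixedPoint_lt hf (lt_above i)
      simp only [Fin.lt_def, val_above] at this
      omega⟩,
    fun a b hab => by
      have := f.2.1 (above_le_above hab)
      simp only [Fin.le_def] at this ⊢
      omega,
    fun i => by
      have h1 := apply_lt_of_lastFixedPoint_lt hf (lt_above i)
      have h2 := le_apply_of_lastFixedPoint_le hf (lt_above i).le
      simp only [Fin.lt_def, Fin.le_def, val_above] at h1 h2 ⊢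
      omega⟩

lemma eq_castLE_or_eq_or_eq_above (i : Fin (n + 1)) :
    (∃ i' : Fin j, i = i'.castLE j.isLt.le) ∨ j = i ∨
      ∃ i' : Fin (n - j), i = above j i' := by
  rcases lt_trichotomy i j with hi | rfl | hi
  · exact .inl ⟨⟨i, hi⟩, rfl⟩
  · exact .inr (.inl rfl)
  · refine .inr (.inr ⟨⟨i - j - 1, by omega⟩, Fin.ext ?_⟩)
    rw [Fin.lt_def] at hi
    simp only [val_above]
    omega

section Glue

variable (g : OrderPreservingRegressive j) (h : OrderPreservingRegressive (n - j))

def glueFun (i : Fin (n + 1)) : Fin (n + 1) :=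
  if hi : i < j then (g.1 ⟨i, hi⟩).castLE j.isLt.le
  else if hij : i = j then j
  else ⟨j + h.1 ⟨i - j - 1, by omega⟩, by omega⟩

lemma glueFun_castLE (i : Fin j) :
    glueFun g h (i.castLE j.isLt.le) = (g.1 i).castLE j.isLt.le := by
  simp [glueFun, Fin.lt_def]

lemma glueFun_self : glueFun g h j = j := by
  simp [glueFun]

lemma val_glueFun_above (i : Fin (n - j)) : (glueFun g h (above j i) : ℕ) = j + h.1 i := by
  have hi := lt_above i
  have hidx : (⟨above j i - j - 1, by omega⟩ : Fin (n - j)) = i :=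
    Fin.ext (by simp only [val_above]; omega)
  simp only [glueFun, hi.not_gt, hi.ne', dite_false, hidx]

lemma glueFun_le (i : Fin (n + 1)) : glueFun g h i ≤ i := by
  rcases eq_castLE_or_eq_or_eq_above (j := j) i with ⟨i, rfl⟩ | rfl | ⟨i, rfl⟩
  · rw [glueFun_castLE]
    exact g.2.2 i
  · rw [glueFun_self]
  · have := h.2.2 i
    rw [Fin.le_def, val_glueFun_above, val_above]
    rw [Fin.le_def] at this
    omega

lemma monotone_glueFun : Monotone (glueFun g h) := by
  intro a b hab
  -- the three blocks take values in `[0, j)`, `{j}` and `[j, n]` respectively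
  rcases eq_castLE_or_eq_or_eq_above (j := j) a with ⟨a, rfl⟩ | rfl | ⟨a, rfl⟩ <;>
  rcases eq_castLE_or_eq_or_eq_above (j := j) b with ⟨b, rfl⟩ | rfl | ⟨b, rfl⟩ <;>
  simp only [Fin.le_def, glueFun_castLE, glueFun_self, val_glueFun_above, Fin.val_castLE,
    val_above] at hab ⊢
  all_goals first
    | exact g.2.1 hab
    | exact Nat.add_le_add_left (h.2.1 (Nat.le_of_add_le_add_left hab)) _
    | exact (g.1 _).isLt.le.trans (Nat.le_add_right _ _)
    | omega

def glue : OrderPreservingRegressive (n + 1) :=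
  ⟨glueFun g h, monotone_glueFun g h, glueFun_le g h⟩

lemma lastFixedPoint_glue : lastFixedPoint (glue g h) = j := by
  refine lastFixedPoint_eq_iff.mpr ⟨glueFun_self g h, fun i hi => ?_⟩
  rcases eq_castLE_or_eq_or_eq_above (j := j) i with ⟨i, rfl⟩ | rfl | ⟨i, rfl⟩
  · exact absurd hi (lt_asymm (show i.castLE _ < j from i.isLt))
  · exact absurd hi (lt_irrefl _)
  · have := h.2.2 i
    rw [Fin.le_def] at this
    rw [Fin.lt_def]
    simp only [glue, val_glueFun_above, val_above]
    omega

end Glue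

variable (j) in
def fiberEquiv :
    {f : OrderPreservingRegressive (n + 1) // lastFixedPoint f = j} ≃
      OrderPreservingRegressive j × OrderPreservingRegressive (n - j) where
  toFun f := (restrictBelow j f.1, shiftAbove f.2)
  invFun p := ⟨glue p.1 p.2, lastFixedPoint_glue p.1 p.2⟩
  left_inv := by
    rintro ⟨f, hf⟩
    refine Subtype.ext (Subtype.ext (funext fun i => ?_))
    rcases eq_castLE_or_eq_or_eq_above (j := j) i with ⟨i, rfl⟩ | rfl | ⟨i, rfl⟩
    · exact glueFun_castLE _ _ i
    · exact (glueFun_self _ _).trans (lastFixedPoint_eq_iff.mp hf).1.symm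
    · have := le_apply_of_lastFixedPoint_le hf (lt_above i).le
      rw [Fin.le_def] at this
      refine Fin.ext ?_
      simp only [glue, val_glueFun_above, shiftAbove]
      omega
  right_inv := by
    rintro ⟨g, h⟩
    refine Prod.ext (Subtype.ext (funext fun i => Fin.ext ?_))
      (Subtype.ext (funext fun i => Fin.ext ?_))
    · simp [restrictBelow, glue, glueFun_castLE]
    · simp [shiftAbove, glue, val_glueFun_above]

end Decomposition

lemma card_succ (n : ℕ) :
    Nat.card (OrderPreservingRegressive (n + 1)) =
      ∑ j : Fin (n + 1), Nat.card (OrderPreservingRegressive j) *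
        Nat.card (OrderPreservingRegressive (n - j)) := by
  rw [← Nat.card_congr (Equiv.sigmaFiberEquiv lastFixedPoint), Nat.card_sigma]
  simp only [Nat.card_congr (fiberEquiv _), Nat.card_prod]

theorem card_eq_catalan : ∀ n, Nat.card (OrderPreservingRegressive n) = catalan n
  | 0 => by
    rw [catalan_zero, Nat.card_eq_one_iff_unique]
    exact ⟨inferInstance, ⟨⟨id, monotone_id, le_refl⟩⟩⟩
  | n + 1 => by
    rw [card_succ, catalan_succ]
    exact Finset.sum_congr rfl fun j _ => by rw [card_eq_catalan j, card_eq_catalan (n - j)]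

end OrderPreservingRegressive

/-- The number of order-preserving regressive functions on `{0, …, n−1}` is the
`n`-th Catalan number `(1/(n+1)) * C(2n, n)`. -/
theorem stmt_19 (n : ℕ) :
    Nat.card {f : Fin n → Fin n // Monotone f ∧ ∀ i, f i ≤ i} =
      (2 * n).choose n / (n + 1) :=
  (OrderPreservingRegressive.card_eq_catalan n).trans (catalan_eq_centralBinom_div n)
end
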